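/- arXiv:1902.01004 — 3 statements merged into one kernel-verified Lean document; each statement's English description precedes it below -/
import Mathlib

section
/- Let {E^(k)} be an increasing sequence of subsets of the closed unit ball V of ℝ^(l-1) (E^(k) ⊆ E^(k+1)), and suppose v^(k) ∈ E^(k+1) satisfies v^(k) ∈ argmin over v ∈ V of (x₁^(k) + ⟨v, x̄^(k)⟩), with x^(k) ∈ K_{E^(k)} for all k. If a subsequence of {x^(k)} converges to x*, then x* belongs to the second-order cone K^l. -/
open RealInnerProductSpace Filter

/-- Lemma 2 (single-block version): if `x^(k) ∈ K_{E^(k)}`, the cuts `v^(k)` are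
minimizers over the unit ball and are added to `E^(k+1)`, then any subsequential
limit of `{x^(k)}` lies in the second-order cone. -/
theorem alpn_subseq_limit_in_soc (l : ℕ) (hl : 2 ≤ l)
    (E : ℕ → Set (EuclideanSpace ℝ (Fin (l - 1))))
    (hEball : ∀ k, E k ⊆ Metric.closedBall 0 1)
    (hEmono : ∀ k, E k ⊆ E (k + 1))
    (x : ℕ → ℝ × EuclideanSpace ℝ (Fin (l - 1)))
    (v : ℕ → EuclideanSpace ℝ (Fin (l - 1)))
    (hv : ∀ k, v k ∈ E (k + 1))
    (hargmin : ∀ k, v k ∈ Metric.closedBall 0 1 ∧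
      ∀ u : EuclideanSpace ℝ (Fin (l - 1)), ‖u‖ ≤ 1 →
        (x k).1 + ⟪v k, (x k).2⟫ ≤ (x k).1 + ⟪u, (x k).2⟫)
    (hxK : ∀ k, ∀ u ∈ E k, (x k).1 + ⟪u, (x k).2⟫ ≥ 0)
    (x' : ℝ × EuclideanSpace ℝ (Fin (l - 1))) (φ : ℕ → ℕ) (hφ : StrictMono φ)
    (hlim : Tendsto (x ∘ φ) atTop (nhds x')) :
    x'.1 ≥ ‖x'.2‖ := by
  have hEmono' : Monotone E := monotone_nat_of_le_succ hEmono
  -- key inner product bound: ⟪v k, x̄ k⟫ ≤ -‖x̄ k‖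
  have hkey : ∀ k, ⟪v k, (x k).2⟫ ≤ -‖(x k).2‖ := by
    intro k
    by_cases h0 : (x k).2 = 0
    · simp [h0]
    · have hu : ‖(-(‖(x k).2‖⁻¹) • (x k).2 : EuclideanSpace ℝ (Fin (l - 1)))‖ ≤ 1 := by
        rw [norm_smul]
        simp [abs_of_nonneg (inv_nonneg.2 (norm_nonneg _)),
          inv_mul_cancel₀ (norm_ne_zero_iff.2 h0)]
      have := (hargmin k).2 _ hu
      have hinner : ⟪(-(‖(x k).2‖⁻¹) • (x k).2 : EuclideanSpace ℝ (Fin (l - 1))), (x k).2⟫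
          = -‖(x k).2‖ := by
        rw [real_inner_smul_left, real_inner_self_eq_norm_sq]
        field_simp [norm_ne_zero_iff.2 h0]
      rw [hinner] at this
      linarith
  -- per-k inequality using the cut v (φ k) against x (φ (k+1))
  have hineq : ∀ k, 0 ≤ (x (φ (k+1))).1 - ‖(x (φ k)).2‖
      + ‖(x (φ (k+1))).2 - x'.2‖ + ‖(x (φ k)).2 - x'.2‖ := by
    intro k
    set j := φ k
    set m := φ (k+1)
    have hjm : j + 1 ≤ m := hφ (Nat.lt_succ_self k)
    have hvm : v j ∈ E m := hEmono' hjm (hv j)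
    have h1 : (x m).1 + ⟪v j, (x m).2⟫ ≥ 0 := hxK m (v j) hvm
    have hvnorm : ‖v j‖ ≤ 1 := by
      simpa [Metric.mem_closedBall] using (hargmin j).1
    have h2 : ⟪v j, (x m).2 - (x j).2⟫ ≤ ‖(x m).2 - (x j).2‖ := by
      calc ⟪v j, (x m).2 - (x j).2⟫ ≤ ‖v j‖ * ‖(x m).2 - (x j).2‖ :=
            real_inner_le_norm _ _
        _ ≤ 1 * ‖(x m).2 - (x j).2‖ := by
            exact mul_le_mul_of_nonneg_right hvnorm (norm_nonneg _)
        _ = ‖(x m).2 - (x j).2‖ := one_mul _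
    have h3 : ⟪v j, (x m).2⟫ = ⟪v j, (x j).2⟫ + ⟪v j, (x m).2 - (x j).2⟫ := by
      rw [← inner_add_right]; congr 1; abel
    have h4 : ‖(x m).2 - (x j).2‖ ≤ ‖(x m).2 - x'.2‖ + ‖(x j).2 - x'.2‖ := by
      have := norm_sub_le ((x m).2 - x'.2) ((x j).2 - x'.2)
      simpa [sub_sub_sub_cancel_right] using this
    have := hkey j
    linarith
  -- limits
  have hlim1 : Tendsto (fun k => (x (φ k)).1) atTop (nhds x'.1) :=
    (continuous_fst.tendsto x').comp hlim
  have hlim2 : Tendsto (fun k => (x (φ k)).2) atTop (nhds x'.2) :=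
    (continuous_snd.tendsto x').comp hlim
  have hshift1 : Tendsto (fun k => (x (φ (k+1))).1) atTop (nhds x'.1) :=
    hlim1.comp (tendsto_add_atTop_nat 1)
  have hshift2 : Tendsto (fun k => (x (φ (k+1))).2) atTop (nhds x'.2) :=
    hlim2.comp (tendsto_add_atTop_nat 1)
  have hlimall : Tendsto (fun k => (x (φ (k+1))).1 - ‖(x (φ k)).2‖
      + ‖(x (φ (k+1))).2 - x'.2‖ + ‖(x (φ k)).2 - x'.2‖) atTop
      (nhds (x'.1 - ‖x'.2‖ + ‖x'.2 - x'.2‖ + ‖x'.2 - x'.2‖)) := by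
    exact ((hshift1.sub (hlim2.norm)).add ((hshift2.sub tendsto_const_nhds).norm)).add
      ((hlim2.sub tendsto_const_nhds).norm)
  have : 0 ≤ x'.1 - ‖x'.2‖ + ‖x'.2 - x'.2‖ + ‖x'.2 - x'.2‖ :=
    ge_of_tendsto' hlimall hineq
  simp at this
  linarith
end

section
/- Let {x^(k)} ⊆ ℝ^l satisfy x^(k) ∈ K_{E^(k)} where E^(k) ⊆ E^(k+1) ⊆ V, v^(k) ∈ argmin over v ∈ V of (x₁^(k) + ⟨v, x̄^(k)⟩) and v^(k) ∈ E^(k+1). Let s^(k) ≥ 0 and z^(k) := s^(k) x^(k). Then any accumulation point of {z^(k)} belongs to K^l. -/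
open RealInnerProductSpace Filter Topology

/-- Lemma 2: with `z^(k) = s^(k) x^(k)` for nonnegative scalars `s^(k)`, any
accumulation point of `{z^(k)}` belongs to the second-order cone. -/
theorem alpn_scaled_cluster_point_in_soc (l : ℕ) (hl : 2 ≤ l)
    (E : ℕ → Set (EuclideanSpace ℝ (Fin (l - 1))))
    (hEball : ∀ k, E k ⊆ Metric.closedBall 0 1)
    (hEmono : ∀ k, E k ⊆ E (k + 1))
    (x : ℕ → ℝ × EuclideanSpace ℝ (Fin (l - 1)))
    (v : ℕ → EuclideanSpace ℝ (Fin (l - 1)))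
    (hv : ∀ k, v k ∈ E (k + 1))
    (hargmin : ∀ k, v k ∈ Metric.closedBall 0 1 ∧
      ∀ u : EuclideanSpace ℝ (Fin (l - 1)), ‖u‖ ≤ 1 →
        (x k).1 + ⟪v k, (x k).2⟫ ≤ (x k).1 + ⟪u, (x k).2⟫)
    (hxK : ∀ k, ∀ u ∈ E k, (x k).1 + ⟪u, (x k).2⟫ ≥ 0)
    (s : ℕ → ℝ) (hs : ∀ k, 0 ≤ s k)
    (z : ℕ → ℝ × EuclideanSpace ℝ (Fin (l - 1))) (hz : ∀ k, z k = s k • x k)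
    (z' : ℝ × EuclideanSpace ℝ (Fin (l - 1)))
    (hcluster : MapClusterPt z' atTop z) :
    z'.1 ≥ ‖z'.2‖ := by
  -- basic facts
  have hvnorm : ∀ k, ‖v k‖ ≤ 1 := by
    intro k
    have := (hargmin k).1
    simpa [Metric.mem_closedBall, dist_zero_right] using this
  -- membership in later E's
  have hvE : ∀ k m, k + 1 ≤ m → v k ∈ E m := by
    intro k m hm
    induction m with
    | zero => omega
    | succ n ih =>
      rcases Nat.lt_or_ge (k+1) (n+1) with h | h
      · exact hEmono n (ih (by omega))
      · have : k + 1 = n + 1 := le_antisymm hm h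
        rw [← this]; exact hv k
  -- the inner product at the minimizer equals minus the norm
  have hinner : ∀ k, ⟪v k, (x k).2⟫ = -‖(x k).2‖ := by
    intro k
    have hle : ⟪v k, (x k).2⟫ ≤ -‖(x k).2‖ := by
      by_cases hx0 : (x k).2 = 0
      · simp [hx0]
      · have hnorm : ‖(x k).2‖ > 0 := norm_pos_iff.mpr hx0
        have hu : ‖(-(‖(x k).2‖⁻¹) • (x k).2)‖ ≤ 1 := by
          rw [norm_smul]
          simp [abs_of_pos hnorm, inv_mul_cancel₀ (ne_of_gt hnorm)]
        have := (hargmin k).2 _ hu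
        have h2 : ⟪v k, (x k).2⟫ ≤ ⟪(-(‖(x k).2‖⁻¹) • (x k).2), (x k).2⟫ := by
          linarith
        calc ⟪v k, (x k).2⟫ ≤ ⟪(-(‖(x k).2‖⁻¹) • (x k).2), (x k).2⟫ := h2
          _ = -(‖(x k).2‖⁻¹ * ⟪(x k).2, (x k).2⟫) := by
              rw [real_inner_smul_left]; ring
          _ = -‖(x k).2‖ := by
              rw [real_inner_self_eq_norm_sq]
              field_simp
    have hge : -‖(x k).2‖ ≤ ⟪v k, (x k).2⟫ := by
      have h1 : |⟪v k, (x k).2⟫| ≤ ‖v k‖ * ‖(x k).2‖ := abs_real_inner_le_norm _ _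
      have h2 : ‖v k‖ * ‖(x k).2‖ ≤ 1 * ‖(x k).2‖ :=
        mul_le_mul_of_nonneg_right (hvnorm k) (norm_nonneg _)
      have := neg_abs_le ⟪v k, (x k).2⟫
      nlinarith [abs_nonneg ⟪v k, (x k).2⟫]
    linarith
  -- inner product with z
  have hinnerz : ∀ k, ⟪v k, (z k).2⟫ = -‖(z k).2‖ := by
    intro k
    rw [hz k]
    have h1 : (s k • x k).2 = s k • (x k).2 := rfl
    rw [h1, real_inner_smul_right, hinner k, norm_smul, Real.norm_eq_abs,
      abs_of_nonneg (hs k)]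
    ring
  -- extract subsequence
  obtain ⟨φ, hφmono, hφtendsto⟩ := TopologicalSpace.FirstCountableTopology.tendsto_subseq hcluster
  -- key inequality (A): for each k, z'.1 + ⟪v k, z'.2⟫ ≥ 0
  have hA : ∀ k, 0 ≤ z'.1 + ⟪v k, z'.2⟫ := by
    intro k
    have hcont : Continuous fun w : ℝ × EuclideanSpace ℝ (Fin (l - 1)) =>
        w.1 + ⟪v k, w.2⟫ := continuous_fst.add (continuous_const.inner continuous_snd)
    have htend : Tendsto (fun j => (z (φ j)).1 + ⟪v k, (z (φ j)).2⟫) atTop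
        (𝓝 (z'.1 + ⟪v k, z'.2⟫)) := (hcont.tendsto z').comp hφtendsto
    refine ge_of_tendsto htend ?_
    filter_upwards [eventually_ge_atTop (k + 1)] with j hj
    have hφj : k + 1 ≤ φ j := le_trans hj (hφmono.le_apply)
    have hmem : v k ∈ E (φ j) := hvE k (φ j) hφj
    have hpos : 0 ≤ (x (φ j)).1 + ⟪v k, (x (φ j)).2⟫ := hxK (φ j) (v k) hmem
    have : (z (φ j)).1 + ⟪v k, (z (φ j)).2⟫
        = s (φ j) * ((x (φ j)).1 + ⟪v k, (x (φ j)).2⟫) := by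
      rw [hz]
      have h1 : (s (φ j) • x (φ j)).2 = s (φ j) • (x (φ j)).2 := rfl
      have h2 : (s (φ j) • x (φ j)).1 = s (φ j) * (x (φ j)).1 := rfl
      rw [h1, h2, real_inner_smul_right]; ring
    rw [this]
    exact mul_nonneg (hs _) hpos
  -- per-index lower bound
  have hbound : ∀ j, ‖(z (φ j)).2‖ - ‖z'.2 - (z (φ j)).2‖ ≤ z'.1 := by
    intro j
    have h1 := hA (φ j)
    have h2 : ⟪v (φ j), z'.2⟫ = ⟪v (φ j), (z (φ j)).2⟫ + ⟪v (φ j), z'.2 - (z (φ j)).2⟫ := by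
      rw [← inner_add_right]; congr 1; abel
    have h3 : ⟪v (φ j), z'.2 - (z (φ j)).2⟫ ≤ ‖z'.2 - (z (φ j)).2‖ := by
      have := real_inner_le_norm (v (φ j)) (z'.2 - (z (φ j)).2)
      have h4 : ‖v (φ j)‖ * ‖z'.2 - (z (φ j)).2‖ ≤ 1 * ‖z'.2 - (z (φ j)).2‖ :=
        mul_le_mul_of_nonneg_right (hvnorm _) (norm_nonneg _)
      linarith
    have h5 := hinnerz (φ j)
    rw [h2, h5] at h1
    linarith
  -- pass to the limit
  have htend2 : Tendsto (fun j => ‖(z (φ j)).2‖ - ‖z'.2 - (z (φ j)).2‖) atTop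
      (𝓝 (‖z'.2‖ - ‖z'.2 - z'.2‖)) := by
    have hz2 : Tendsto (fun j => (z (φ j)).2) atTop (𝓝 z'.2) :=
      (continuous_snd.tendsto z').comp hφtendsto
    exact (hz2.norm).sub ((tendsto_const_nhds.sub hz2).norm)
  simp only [sub_self, norm_zero, sub_zero] at htend2
  exact le_of_tendsto htend2 (Eventually.of_forall hbound)
end

section
/- Consider the dual SOCP min{bᵀy : Aᵀy − c ∈ K} with K a self-dual closed convex cone. Suppose its optimal solution set S_D is nonempty, and there exist x* ∈ K with Ax* = b and d* ∈ ℝ^m with ‖d*‖ = 1, Aᵀd* ∈ K, and (Ax*)ᵀd* = 0. Then S_D is unbounded: for any ȳ ∈ S_D and s ≥ 0, ȳ + s d* ∈ S_D. -/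
open RealInnerProductSpace

/-- Theorem 2 (key step): for the dual SOCP `min{bᵀy : Aᵀy - c ∈ K}` with `K`
self-dual, if `x* ∈ K`, `Ax* = b`, and `d*` satisfies `‖d*‖ = 1`, `Aᵀd* ∈ K`,
`(Ax*)ᵀd* = 0`, then the dual optimal set is unbounded:
`ȳ + s d*` is dual optimal for every dual optimal `ȳ` and `s ≥ 0`. -/
theorem dual_optimal_ray (n m : ℕ) (K : Set (EuclideanSpace ℝ (Fin n)))
    (hKclosed : IsClosed K) (hKconv : Convex ℝ K)
    (hself : ∀ y, y ∈ K ↔ ∀ x ∈ K, 0 ≤ ⟪y, x⟫)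
    (A : EuclideanSpace ℝ (Fin n) →ₗ[ℝ] EuclideanSpace ℝ (Fin m))
    (b : EuclideanSpace ℝ (Fin m)) (c : EuclideanSpace ℝ (Fin n))
    (SD : Set (EuclideanSpace ℝ (Fin m)))
    (hSD : SD = {y | LinearMap.adjoint A y - c ∈ K ∧
      ∀ y', LinearMap.adjoint A y' - c ∈ K → ⟪b, y⟫ ≤ ⟪b, y'⟫})
    (hSDne : SD.Nonempty)
    (x' : EuclideanSpace ℝ (Fin n)) (hx'K : x' ∈ K) (hx'feas : A x' = b)
    (d : EuclideanSpace ℝ (Fin m)) (hd1 : ‖d‖ = 1)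
    (hd2 : LinearMap.adjoint A d ∈ K) (hd3 : ⟪A x', d⟫ = 0) :
    ∀ y ∈ SD, ∀ s : ℝ, 0 ≤ s → y + s • d ∈ SD := by
  intro y hy s hs
  rw [hSD] at hy ⊢
  obtain ⟨hfeas, hopt⟩ := hy
  have hbd : ⟪b, d⟫ = 0 := by rw [← hx'feas]; exact hd3
  constructor
  · have key : LinearMap.adjoint A (y + s • d) - c =
        (LinearMap.adjoint A y - c) + s • (LinearMap.adjoint A d) := by
      simp [map_add, map_smul]; abel
    rw [key, hself]
    intro x hx
    rw [inner_add_left, inner_smul_left]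
    have h1 : 0 ≤ ⟪LinearMap.adjoint A y - c, x⟫ := (hself _).mp hfeas x hx
    have h2 : 0 ≤ ⟪LinearMap.adjoint A d, x⟫ := (hself _).mp hd2 x hx
    positivity
  · intro y' hy'
    have := hopt y' hy'
    rw [inner_add_right, inner_smul_right, hbd]
    linarith
end
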